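/- arXiv:math/9308213 — 6 statements merged into one kernel-verified Lean document; each statement's English description precedes it below -/
import Mathlib

section
/- Let p be a prime, H a countable free abelian group, and (b_n) a sequence of nonzero elements of H. Suppose (m_n) is an increasing sequence of naturals such that p^{m_n+n} does not divide p^{m_k+k}·b_k for any k < n. For ξ : ω → {0,1}, set c_{ξ,n} = ξ(n)·p^{m_n}. If ξ₀ ≠ ξ₁ and n is minimal with ξ₀(n) ≠ ξ₁(n), then Σ_{k=0}^{n} p^k c_{ξ₀,k} b_k − Σ_{k=0}^{n} p^k c_{ξ₁,k} b_k = ± p^{m_n+n} b_n, which is not congruent to 0 modulo p^{m_{n+1}+n+1}·H. -/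
open Finset

theorem sum_range_succ_sub_sum_range_succ_of_eq_of_lt {G : Type*} [AddCommGroup G]
    {f g : ℕ → G} {n : ℕ} (h : ∀ k < n, f k = g k) :
    ∑ k ∈ range (n + 1), f k - ∑ k ∈ range (n + 1), g k = f n - g n := by
  rw [sum_range_succ, sum_range_succ, sum_congr rfl fun k hk => h k (mem_range.mp hk)]
  abel

theorem Nat.cast_sub_cast_eq_one_or_eq_neg_one {a b : ℕ} (ha : a ≤ 1) (hb : b ≤ 1)
    (hab : a ≠ b) : (a : ℤ) - b = 1 ∨ (a : ℤ) - b = -1 := by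
  omega

theorem exists_smul_eq_neg_iff {R M : Type*} [Ring R] [AddCommGroup M] [Module R M]
    (a : R) (x : M) : (∃ y : M, a • y = -x) ↔ ∃ y : M, a • y = x :=
  ⟨fun ⟨y, hy⟩ => ⟨-y, by rw [smul_neg, hy, neg_neg]⟩,
    fun ⟨y, hy⟩ => ⟨-y, by rw [smul_neg, hy]⟩⟩

open Finset in
theorem stmt1_general (p : ℕ) (H : Type) [AddCommGroup H]
    (b : ℕ → H)
    (m : ℕ → ℕ)
    (hdiv : ∀ n, ∀ k < n, ¬ ∃ h : H, ((p : ℤ) ^ (m n + n)) • h = ((p : ℤ) ^ (m k + k)) • b k)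
    (ξ₀ ξ₁ : ℕ → ℕ) (hξ₀ : ∀ n, ξ₀ n ≤ 1) (hξ₁ : ∀ n, ξ₁ n ≤ 1)
    (n : ℕ) (hne : ξ₀ n ≠ ξ₁ n) (hmin : ∀ k < n, ξ₀ k = ξ₁ k) :
    ((∑ k ∈ range (n + 1), ((p : ℤ) ^ k * (ξ₀ k * p ^ (m k) : ℕ)) • b k)
        - ∑ k ∈ range (n + 1), ((p : ℤ) ^ k * (ξ₁ k * p ^ (m k) : ℕ)) • b k
          = ((p : ℤ) ^ (m n + n)) • b n
      ∨ (∑ k ∈ range (n + 1), ((p : ℤ) ^ k * (ξ₀ k * p ^ (m k) : ℕ)) • b k)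
        - ∑ k ∈ range (n + 1), ((p : ℤ) ^ k * (ξ₁ k * p ^ (m k) : ℕ)) • b k
          = -(((p : ℤ) ^ (m n + n)) • b n))
    ∧ ¬ ∃ h : H, ((p : ℤ) ^ (m (n + 1) + (n + 1))) • h
        = (∑ k ∈ range (n + 1), ((p : ℤ) ^ k * (ξ₀ k * p ^ (m k) : ℕ)) • b k)
          - ∑ k ∈ range (n + 1), ((p : ℤ) ^ k * (ξ₁ k * p ^ (m k) : ℕ)) • b k := by
  have hdiff : (∑ k ∈ range (n + 1), ((p : ℤ) ^ k * (ξ₀ k * p ^ (m k) : ℕ)) • b k)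
      - ∑ k ∈ range (n + 1), ((p : ℤ) ^ k * (ξ₁ k * p ^ (m k) : ℕ)) • b k
      = (((ξ₀ n : ℤ) - ξ₁ n) * (p : ℤ) ^ (m n + n)) • b n := by
    rw [sum_range_succ_sub_sum_range_succ_of_eq_of_lt fun k hk => by rw [hmin k hk], ← sub_smul]
    push_cast
    ring_nf
  have hndvd := hdiv (n + 1) n n.lt_succ_self
  rw [hdiff]
  rcases Nat.cast_sub_cast_eq_one_or_eq_neg_one (hξ₀ n) (hξ₁ n) hne with hε | hε <;>
    rw [hε]
  · rw [one_mul]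
    exact ⟨Or.inl rfl, hndvd⟩
  · rw [neg_one_mul, neg_smul, exists_smul_eq_neg_iff]
    exact ⟨Or.inr rfl, hndvd⟩

open Finset in
/-- with `m` increasing and `p ^ (m n + n)` not dividing `p ^ (m k + k) • b k`
for `k < n`, and `c_{ξ,n} = ξ n * p ^ (m n)` for `ξ : ℕ → {0,1}`, if `n` is minimal with
`ξ₀ n ≠ ξ₁ n` then the difference of the partial sums up to `n` equals `± p ^ (m n + n) • b n`
and is not congruent to `0` modulo `p ^ (m (n+1) + (n+1)) • H`. -/
theorem stmt1 (p : ℕ) (hp : p.Prime) (H : Type) [AddCommGroup H]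
    [Module.Free ℤ H] [Countable H] (b : ℕ → H) (hb : ∀ n, b n ≠ 0)
    (m : ℕ → ℕ) (hm : StrictMono m)
    (hdiv : ∀ n, ∀ k < n, ¬ ∃ h : H, ((p : ℤ) ^ (m n + n)) • h = ((p : ℤ) ^ (m k + k)) • b k)
    (ξ₀ ξ₁ : ℕ → ℕ) (hξ₀ : ∀ n, ξ₀ n ≤ 1) (hξ₁ : ∀ n, ξ₁ n ≤ 1)
    (n : ℕ) (hne : ξ₀ n ≠ ξ₁ n) (hmin : ∀ k < n, ξ₀ k = ξ₁ k) :
    ((∑ k ∈ range (n + 1), ((p : ℤ) ^ k * (ξ₀ k * p ^ (m k) : ℕ)) • b k)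
        - ∑ k ∈ range (n + 1), ((p : ℤ) ^ k * (ξ₁ k * p ^ (m k) : ℕ)) • b k
          = ((p : ℤ) ^ (m n + n)) • b n
      ∨ (∑ k ∈ range (n + 1), ((p : ℤ) ^ k * (ξ₀ k * p ^ (m k) : ℕ)) • b k)
        - ∑ k ∈ range (n + 1), ((p : ℤ) ^ k * (ξ₁ k * p ^ (m k) : ℕ)) • b k
          = -(((p : ℤ) ^ (m n + n)) • b n))
    ∧ ¬ ∃ h : H, ((p : ℤ) ^ (m (n + 1) + (n + 1))) • h
        = (∑ k ∈ range (n + 1), ((p : ℤ) ^ k * (ξ₀ k * p ^ (m k) : ℕ)) • b k)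
          - ∑ k ∈ range (n + 1), ((p : ℤ) ^ k * (ξ₁ k * p ^ (m k) : ℕ)) • b k :=
  stmt1_general p H b m hdiv ξ₀ ξ₁ hξ₀ hξ₁ n hne hmin
end

section
/- Let p be a prime and H the p-adic completion of a countable free abelian group H₀. If (b_n) is a sequence of non-zero elements of H₀, then the set { Σ_{j∈ω} p^j c_j b_j : (c_j) ∈ ℤ^ω } of p-adically convergent sums has cardinality 2^{ℵ₀}. -/
open Finset

section Aux

variable {p : ℕ} {H₀ : Type} [AddCommGroup H₀]

theorem mem_pows {x : H₀} {n : ℕ} :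
    x ∈ ((Ideal.span {(p : ℤ)}) ^ n • ⊤ : Submodule ℤ H₀) ↔ ∃ y, x = (p : ℤ) ^ n • y := by
  constructor
  · intro h
    refine Submodule.smul_induction_on h ?_ ?_
    · intro a ha m _
      rw [Ideal.span_singleton_pow, Ideal.mem_span_singleton] at ha
      obtain ⟨z, rfl⟩ := ha
      exact ⟨z • m, by rw [mul_smul]⟩
    · rintro x y ⟨x', rfl⟩ ⟨y', rfl⟩
      exact ⟨x' + y', (smul_add _ _ _).symm⟩
  · rintro ⟨y, rfl⟩
    refine Submodule.smul_mem_smul ?_ Submodule.mem_top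
    rw [Ideal.span_singleton_pow]
    exact Ideal.mem_span_singleton_self _

theorem term_mem {m n : ℕ} (h : n ≤ m) (a : ℤ) (x : H₀) :
    (a * (p : ℤ) ^ m) • x ∈ ((Ideal.span {(p : ℤ)}) ^ n • ⊤ : Submodule ℤ H₀) := by
  have h1 : (p : ℤ) ^ m = (p : ℤ) ^ n * (p : ℤ) ^ (m - n) := by
    rw [← pow_add, Nat.add_sub_cancel' h]
  have h2 : a * (p : ℤ) ^ m = (p : ℤ) ^ n * (a * (p : ℤ) ^ (m - n)) := by rw [h1]; ring
  exact mem_pows.mpr ⟨(a * (p : ℤ) ^ (m - n)) • x, by rw [h2, mul_smul]⟩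

theorem exists_not_mem_pows (hp : p.Prime) [Module.Free ℤ H₀] (x : H₀) (hx : x ≠ 0) :
    ∃ m, x ∉ ((Ideal.span {(p : ℤ)}) ^ m • ⊤ : Submodule ℤ H₀) := by
  classical
  let B := Module.Free.chooseBasis ℤ H₀
  have hr : B.repr x ≠ 0 := by simpa using hx
  obtain ⟨i, hi⟩ := Finsupp.ne_iff.mp hr
  rw [Finsupp.coe_zero, Pi.zero_apply] at hi
  obtain ⟨a, ha⟩ : ∃ a : ℤ, B.repr x i = a := ⟨_, rfl⟩
  refine ⟨a.natAbs, fun hmem => ?_⟩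
  obtain ⟨y, hy⟩ := mem_pows.mp hmem
  have hdvd : (p : ℤ) ^ a.natAbs ∣ a := by
    refine ⟨B.repr y i, ?_⟩
    conv_lhs => rw [← ha, hy]
    rw [map_smul, Finsupp.smul_apply, smul_eq_mul]
  have hdvd' : p ^ a.natAbs ∣ a.natAbs := by
    rwa [← Nat.cast_pow, Int.natCast_dvd] at hdvd
  have h1 : p ^ a.natAbs ≤ a.natAbs := Nat.le_of_dvd (Int.natAbs_pos.mpr (ha ▸ hi)) hdvd'
  have h2 : a.natAbs < 2 ^ a.natAbs := Nat.lt_two_pow_self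
  have h3 : 2 ^ a.natAbs ≤ p ^ a.natAbs := Nat.pow_le_pow_left hp.two_le _
  omega

theorem cancel_pows (hp : p.Prime) [Module.IsTorsionFree ℤ H₀] (a h : ℕ) (x : H₀)
    (hx : ((p : ℤ) ^ a) • x ∈ ((Ideal.span {(p : ℤ)}) ^ (a + h) • ⊤ : Submodule ℤ H₀)) :
    x ∈ ((Ideal.span {(p : ℤ)}) ^ h • ⊤ : Submodule ℤ H₀) := by
  obtain ⟨y, hy⟩ := mem_pows.mp hx
  rw [pow_add, mul_smul] at hy
  have hpa : ((p : ℤ) ^ a) ≠ 0 := pow_ne_zero _ (by exact_mod_cast hp.ne_zero)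
  exact mem_pows.mpr ⟨y, smul_right_injective H₀ hpa hy⟩

end Aux

open Finset in
/-- Let `H` be the `p`-adic completion of a countable free abelian group `H₀`
(the inverse limit of `H₀ ⧸ p ^ n H₀`). If `b : ℕ → H₀` is a sequence of nonzero elements,
then the set of sums `Σ_{j} p ^ j • c j • b j` for `c : ℕ → ℤ` (an element of the completion
whose `n`-th component is the partial sum `Σ_{j < n} p ^ j • c j • b j`, since the remaining
terms are divisible by `p ^ n`) has cardinality `2 ^ ℵ₀`. -/
theorem stmt2 (p : ℕ) (hp : p.Prime) (H₀ : Type) [AddCommGroup H₀] [Module ℤ H₀]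
    [Module.Free ℤ H₀] [Countable H₀] (b : ℕ → H₀) (hb : ∀ n, b n ≠ 0) :
    Cardinal.mk
      {x : AdicCompletion (Ideal.span {(p : ℤ)}) H₀ |
        ∃ c : ℕ → ℤ, ∀ n : ℕ,
          AdicCompletion.eval (Ideal.span {(p : ℤ)}) H₀ n x
            = Submodule.Quotient.mk (∑ j ∈ range n, ((p : ℤ) ^ j * c j) • b j)} =
      2 ^ Cardinal.aleph0 := by
  classical
  rename_i iAG iM iF iC
  have hiM : iM = AddCommGroup.toIntModule H₀ := (AddCommGroup.uniqueIntModule).uniq iM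
  subst hiM
  -- heights
  choose Hgt hHgt using fun k => exists_not_mem_pows hp (b k) (hb k)
  have Hgt_pos : ∀ k, 0 < Hgt k := by
    intro k
    rcases Nat.eq_zero_or_pos (Hgt k) with h | h
    · exfalso
      apply hHgt k
      rw [h]
      exact mem_pows.mpr ⟨b k, by simp⟩
    · exact h
  -- rapidly increasing exponents
  let M : ℕ → ℕ := fun k => Nat.rec 0 (fun j Mj => Mj + Hgt j) k
  have hMsucc : ∀ k, M (k + 1) = M k + Hgt k := fun k => rfl
  have hMmono : Monotone M := monotone_nat_of_le_succ fun k => by rw [hMsucc]; omega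
  -- the coefficient sequences
  let c : (ℕ → Bool) → ℕ → ℤ := fun s j => if s j then (p : ℤ) ^ (M j) else 0
  have hterm_mem : ∀ (s : ℕ → Bool) (j n : ℕ), n ≤ j + M j →
      ((p : ℤ) ^ j * c s j) • b j ∈ ((Ideal.span {(p : ℤ)}) ^ n • ⊤ : Submodule ℤ H₀) := by
    intro s j n hn
    by_cases hs : s j
    · have h1 : (p : ℤ) ^ j * c s j = 1 * (p : ℤ) ^ (j + M j) := by
        simp [c, hs, pow_add]
      rw [h1]
      exact term_mem hn 1 (b j)
    · have h1 : (p : ℤ) ^ j * c s j = 0 := by simp [c, hs]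
      rw [h1, zero_smul]
      exact Submodule.zero_mem _
  -- the elements of the completion
  let X : (ℕ → Bool) → AdicCompletion (Ideal.span {(p : ℤ)}) H₀ := fun s =>
    ⟨fun n => Submodule.Quotient.mk (∑ j ∈ range n, ((p : ℤ) ^ j * c s j) • b j), by
      intro m n hmn
      change Submodule.Quotient.mk (∑ j ∈ range n, ((p : ℤ) ^ j * c s j) • b j) = Submodule.Quotient.mk _
      rw [Submodule.Quotient.eq,
        ← Finset.sum_Ico_eq_sub _ hmn]
      exact Submodule.sum_mem _ fun j hj =>
        hterm_mem s j m (le_trans (mem_Ico.mp hj).1 (Nat.le_add_right _ _))⟩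
  have hXmem : ∀ s, X s ∈
      {x : AdicCompletion (Ideal.span {(p : ℤ)}) H₀ |
        ∃ c : ℕ → ℤ, ∀ n : ℕ,
          AdicCompletion.eval (Ideal.span {(p : ℤ)}) H₀ n x
            = Submodule.Quotient.mk (∑ j ∈ range n, ((p : ℤ) ^ j * c j) • b j)} :=
    fun s => ⟨c s, fun n => rfl⟩
  -- injectivity of X
  have hXinj : Function.Injective X := by
    intro s t hst
    by_contra hne
    have hex : ∃ k, s k ≠ t k := Function.ne_iff.mp hne
    set k := Nat.find hex with hkdef
    have hk : s k ≠ t k := Nat.find_spec hex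
    have hkmin : ∀ j, j < k → s j = t j := fun j hj => not_not.mp (Nat.find_min hex hj)
    set n := k + M (k + 1) with hn
    have hkn : k < n := by
      have := Hgt_pos k
      rw [hn, hMsucc]
      omega
    have h1 : (∑ j ∈ range n, ((p : ℤ) ^ j * c s j) • b j)
        - (∑ j ∈ range n, ((p : ℤ) ^ j * c t j) • b j)
        ∈ ((Ideal.span {(p : ℤ)}) ^ n • ⊤ : Submodule ℤ H₀) := by
      rw [← Submodule.Quotient.eq]
      exact congrArg (fun x => x.1 n) hst
    have hsum : ∑ j ∈ range n, ((p : ℤ) ^ j * (c s j - c t j)) • b j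
        ∈ ((Ideal.span {(p : ℤ)}) ^ n • ⊤ : Submodule ℤ H₀) := by
      have h2 : ∑ j ∈ range n, ((p : ℤ) ^ j * (c s j - c t j)) • b j
          = (∑ j ∈ range n, ((p : ℤ) ^ j * c s j) • b j)
            - (∑ j ∈ range n, ((p : ℤ) ^ j * c t j) • b j) := by
        rw [← Finset.sum_sub_distrib]
        exact Finset.sum_congr rfl fun j _ => by rw [mul_sub, sub_smul]
      rw [h2]
      exact h1
    have hd0 : ∀ j, j < k → ((p : ℤ) ^ j * (c s j - c t j)) • b j = 0 := by
      intro j hj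
      have : c s j = c t j := by simp only [c, hkmin j hj]
      rw [this, sub_self, mul_zero, zero_smul]
    have hdmem : ∀ j, k < j → ((p : ℤ) ^ j * (c s j - c t j)) • b j
        ∈ ((Ideal.span {(p : ℤ)}) ^ n • ⊤ : Submodule ℤ H₀) := by
      intro j hkj
      have hmj : n ≤ j + M j := by
        have h3 : k + 1 + M (k + 1) ≤ j + M j := add_le_add hkj (hMmono hkj)
        omega
      have h4 : (p : ℤ) ^ j * (c s j - c t j)
          = ((if s j then (1 : ℤ) else 0) - (if t j then (1 : ℤ) else 0)) * (p : ℤ) ^ (j + M j) := by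
        by_cases hsj : s j <;> by_cases htj : t j <;> simp [c, hsj, htj, pow_add]
      rw [h4]
      exact term_mem hmj _ _
    have hdk : ((p : ℤ) ^ k * (c s k - c t k)) • b k
        ∈ ((Ideal.span {(p : ℤ)}) ^ n • ⊤ : Submodule ℤ H₀) := by
      have hsplit := Finset.add_sum_erase (range n)
        (fun j => ((p : ℤ) ^ j * (c s j - c t j)) • b j) (mem_range.mpr hkn)
      have h5 : ((p : ℤ) ^ k * (c s k - c t k)) • b k
          = (∑ j ∈ range n, ((p : ℤ) ^ j * (c s j - c t j)) • b j)
            - ∑ j ∈ (range n).erase k, ((p : ℤ) ^ j * (c s j - c t j)) • b j :=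
        (eq_sub_of_add_eq hsplit)
      rw [h5]
      refine Submodule.sub_mem _ hsum (Submodule.sum_mem _ fun j hj => ?_)
      obtain ⟨hjk, _⟩ := Finset.mem_erase.mp hj
      rcases lt_or_gt_of_ne hjk with h | h
      · rw [hd0 j h]
        exact Submodule.zero_mem _
      · exact hdmem j h
    -- extract the pure term p^(k+M k) • b k
    have hfinal : ((p : ℤ) ^ (k + M k)) • b k
        ∈ ((Ideal.span {(p : ℤ)}) ^ n • ⊤ : Submodule ℤ H₀) := by
      by_cases hsk : s k = true
      · have htk : t k = false := by
          rcases Bool.eq_false_or_eq_true (t k) with h | h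
          · exact absurd (hsk.trans h.symm) hk
          · exact h
        have h6 : (p : ℤ) ^ k * (c s k - c t k) = (p : ℤ) ^ (k + M k) := by
          simp [c, hsk, htk, pow_add]
        rwa [h6] at hdk
      · have hsk' : s k = false := Bool.eq_false_iff.mpr hsk
        have htk : t k = true := by
          rcases Bool.eq_false_or_eq_true (t k) with h | h
          · exact h
          · exact absurd (hsk'.trans h.symm) hk
        have h6 : (p : ℤ) ^ k * (c s k - c t k) = -((p : ℤ) ^ (k + M k)) := by
          simp [c, hsk', htk, pow_add]
        rw [h6, neg_smul] at hdk
        exact (Submodule.neg_mem_iff _).mp hdk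
    have h7 : b k ∈ ((Ideal.span {(p : ℤ)}) ^ (Hgt k) • ⊤ : Submodule ℤ H₀) := by
      refine cancel_pows hp (k + M k) (Hgt k) (b k) ?_
      have h8 : k + M k + Hgt k = n := by rw [hn, hMsucc]; omega
      rwa [h8]
    exact hHgt k h7
  -- cardinality computation
  apply le_antisymm
  · choose e he using fun n : ℕ =>
      (countable_iff_exists_injective
        (H₀ ⧸ ((Ideal.span {(p : ℤ)}) ^ n • ⊤ : Submodule ℤ H₀))).mp Quotient.countable
    have hG : Function.Injective
        (fun (x : {x : AdicCompletion (Ideal.span {(p : ℤ)}) H₀ |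
          ∃ c : ℕ → ℤ, ∀ n : ℕ,
            AdicCompletion.eval (Ideal.span {(p : ℤ)}) H₀ n x
              = Submodule.Quotient.mk (∑ j ∈ range n, ((p : ℤ) ^ j * c j) • b j)})
          (m : ℕ) => e m (x.1.1 m)) := by
      intro x y hxy
      ext m
      exact he m (congrFun hxy m)
    refine le_trans (Cardinal.mk_le_of_injective hG) ?_
    simp [Cardinal.mk_arrow, Cardinal.power_self_eq le_rfl]
  · have hF : Function.Injective
        (fun s : ℕ → Bool => (⟨X s, hXmem s⟩ :
          {x : AdicCompletion (Ideal.span {(p : ℤ)}) H₀ |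
            ∃ c : ℕ → ℤ, ∀ n : ℕ,
              AdicCompletion.eval (Ideal.span {(p : ℤ)}) H₀ n x
                = Submodule.Quotient.mk (∑ j ∈ range n, ((p : ℤ) ^ j * c j) • b j)})) :=
      fun s t h => hXinj (congrArg Subtype.val h)
    have h9 := Cardinal.mk_le_of_injective hF
    have h10 : Cardinal.mk (ℕ → Bool) = 2 ^ Cardinal.aleph0 := by
      simp [Cardinal.mk_arrow]
    rwa [h10] at h9
end

section
/- Let p be a prime, A₀ a subgroup of a ℚ-vector space D, and y, a₀, a₁, … elements of D with all a_j ∈ A₀ and y ∉ the ℚ-span of A₀. Define y_n = (y + Σ_{j<n} p^j a_j)/p^n and let A be the subgroup of D generated by A₀ ∪ {y_n : n ∈ ω}. Then the quotient A/A₀ is generated by the images of the y_n, and the image of y_n is p times the image of y_{n+1}; hence A/A₀ is a p-divisible-by-stages group isomorphic to a subgroup of ℚ containing ℤ, namely isomorphic to ℚ^{(p)} = ℤ[1/p] provided the image of y₀ has infinite order in A/A₀. -/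
open Finset in
/-- Let `A₀ ≤ D` (a `ℚ`-vector space), `a j ∈ A₀`, `y ∉ spanℚ A₀`,
`y_n := (y + Σ_{j<n} p^j • a j) / p^n`, and let `A` be the subgroup generated by
`A₀ ∪ {y_n : n ∈ ω}`.  Then `A/A₀` (realized as the image of `A` under the quotient map
`q : D → D/A₀`) is generated by the images of the `y_n`, the image of `y_n` is `p` times the
image of `y_{n+1}`, and `A/A₀ ≅ ℚ^{(p)} = ℤ[1/p]` provided the image of `y_0` has infinite
order. -/
theorem stmt7 (p : ℕ) (hp : p.Prime) (D : Type) [AddCommGroup D] [Module ℚ D]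
    (A₀ : AddSubgroup D) (a : ℕ → D) (ha : ∀ j, a j ∈ A₀)
    (y : D) (hy : y ∉ Submodule.span ℚ (A₀ : Set D))
    (Y : ℕ → D)
    (hY : ∀ n, Y n = (((p : ℚ) ^ n)⁻¹) • (y + ∑ j ∈ range n, ((p : ℚ) ^ j) • a j))
    (A : AddSubgroup D) (hA : A = AddSubgroup.closure ((A₀ : Set D) ∪ Set.range Y)) :
    (AddSubgroup.map (QuotientAddGroup.mk' A₀) A
        = AddSubgroup.closure (Set.range fun n => QuotientAddGroup.mk' A₀ (Y n)))
    ∧ (∀ n, QuotientAddGroup.mk' A₀ (Y n) = (p : ℤ) • QuotientAddGroup.mk' A₀ (Y (n + 1)))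
    ∧ (addOrderOf (QuotientAddGroup.mk' A₀ (Y 0)) = 0 →
        Nonempty ((AddSubgroup.map (QuotientAddGroup.mk' A₀) A) ≃+
          (Submodule.span ℤ (Set.range fun n : ℕ => ((p : ℚ) ^ n)⁻¹)))) := by
  have hp0 : (p : ℚ) ≠ 0 := Nat.cast_ne_zero.mpr hp.ne_zero
  set q : D →+ D ⧸ A₀ := QuotientAddGroup.mk' A₀ with hq
  set g : ℕ → D ⧸ A₀ := fun n => q (Y n) with hg
  -- the step relation
  have hstep : ∀ n, g n = (p : ℤ) • g (n + 1) := by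
    intro n
    have key : Y n - (p : ℤ) • Y (n + 1) ∈ A₀ := by
      have h1 : (p : ℤ) • Y (n + 1) = (p : ℚ) • Y (n + 1) := by
        rw [← Int.cast_smul_eq_zsmul ℚ]; norm_num
      have h2 : (p : ℚ) • Y (n + 1) = Y n + a n := by
        rw [hY (n + 1), hY n, Finset.sum_range_succ, smul_smul, smul_add, smul_add]
        have hpow : (p : ℚ) * ((p : ℚ) ^ (n + 1))⁻¹ = ((p : ℚ) ^ n)⁻¹ := by
          field_simp; ring
        rw [hpow, smul_add, smul_smul]
        have : ((p : ℚ) ^ n)⁻¹ * (p : ℚ) ^ n = 1 := inv_mul_cancel₀ (pow_ne_zero _ hp0)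
        rw [this, one_smul]; abel
      rw [h1, h2]
      have : Y n - (Y n + a n) = -(a n) := by abel
      rw [this]
      exact neg_mem (ha n)
    have : q (Y n - (p : ℤ) • Y (n + 1)) = 0 := (QuotientAddGroup.eq_zero_iff _).mpr key
    rw [map_sub, map_zsmul, sub_eq_zero] at this
    exact this
  -- Part 1
  have part1 : AddSubgroup.map q A = AddSubgroup.closure (Set.range fun n => q (Y n)) := by
    rw [hA, AddMonoidHom.map_closure]
    apply le_antisymm
    · rw [AddSubgroup.closure_le]
      rintro x ⟨d, hd, rfl⟩
      rcases hd with hd | ⟨n, rfl⟩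
      · have : q d = 0 := (QuotientAddGroup.eq_zero_iff _).mpr hd
        rw [this]; exact zero_mem _
      · exact AddSubgroup.subset_closure ⟨n, rfl⟩
    · rw [AddSubgroup.closure_le]
      rintro x ⟨n, rfl⟩
      exact AddSubgroup.subset_closure ⟨Y n, Or.inr ⟨n, rfl⟩, rfl⟩
  refine ⟨part1, hstep, ?_⟩
  -- Part 3
  intro h0
  have hpowk : ∀ n k, g n = ((p : ℤ) ^ k) • g (n + k) := by
    intro n k
    induction k with
    | zero => simp
    | succ k ih =>
      rw [ih, show n + (k + 1) = (n + k) + 1 from rfl, hstep (n + k), smul_smul, pow_succ]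
  set S := Submodule.span ℤ (Set.range fun n : ℕ => ((p : ℚ) ^ n)⁻¹) with hS
  have hmem : ∀ x : ℚ, x ∈ S → ∃ n : ℕ, ∃ z : ℤ, x = (z : ℚ) * ((p : ℚ) ^ n)⁻¹ := by
    intro x hx
    induction hx using Submodule.span_induction with
    | mem u hu => rcases hu with ⟨n, rfl⟩; exact ⟨n, 1, by norm_num⟩
    | zero => exact ⟨0, 0, by norm_num⟩
    | add u v _ _ ihu ihv =>
      obtain ⟨n, z, rfl⟩ := ihu
      obtain ⟨m, w, rfl⟩ := ihv
      refine ⟨n + m, z * p ^ m + w * p ^ n, ?_⟩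
      push_cast
      field_simp
      ring_nf
    | smul c u _ ihu =>
      obtain ⟨n, z, rfl⟩ := ihu
      exact ⟨n, c * z, by push_cast; rw [zsmul_eq_mul]; push_cast; ring⟩
  -- representation-independence of z • g n
  have hval : ∀ (n m : ℕ) (z w : ℤ), (z : ℚ) * ((p : ℚ) ^ n)⁻¹ = (w : ℚ) * ((p : ℚ) ^ m)⁻¹ →
      z • g n = w • g m := by
    intro n m z w h
    have hcross : z * (p : ℤ) ^ m = w * (p : ℤ) ^ n := by
      have : (z : ℚ) * (p : ℚ) ^ m = (w : ℚ) * (p : ℚ) ^ n := by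
        field_simp at h
        linarith [h]
      exact_mod_cast this
    calc z • g n = z • (((p : ℤ) ^ m) • g (n + m)) := by rw [← hpowk]
      _ = (z * (p : ℤ) ^ m) • g (n + m) := by rw [smul_smul]
      _ = (w * (p : ℤ) ^ n) • g (n + m) := by rw [hcross]
      _ = w • (((p : ℤ) ^ n) • g (m + n)) := by rw [smul_smul, add_comm n m]
      _ = w • g m := by rw [← hpowk]
  -- choose representations
  choose nn zz hrep using fun x : S => hmem x.1 x.2
  set F : S → D ⧸ A₀ := fun x => (zz x) • g (nn x) with hF
  have hFeq : ∀ (x : S) (n : ℕ) (z : ℤ), (x : ℚ) = (z : ℚ) * ((p : ℚ) ^ n)⁻¹ →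
      F x = z • g n := by
    intro x n z h
    exact hval (nn x) n (zz x) z ((hrep x).symm.trans h)
  have hFadd : ∀ x₂ y₂ : S, F (x₂ + y₂) = F x₂ + F y₂ := by
    intro u v
    obtain ⟨n, z, hu⟩ := hmem u.1 u.2
    obtain ⟨m, w, hv⟩ := hmem v.1 v.2
    have huv : ((u + v : S) : ℚ) = ((z * p ^ m + w * p ^ n : ℤ) : ℚ) * ((p : ℚ) ^ (n + m))⁻¹ := by
      push_cast
      rw [hu, hv]
      field_simp
      ring_nf
    rw [hFeq _ _ _ huv, hFeq _ _ _ hu, hFeq _ _ _ hv]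
    rw [add_smul]
    congr 1
    · rw [hpowk n m, smul_smul]
    · rw [hpowk m n, smul_smul, add_comm n m]
  set ψ : S →+ D ⧸ A₀ := AddMonoidHom.mk' F hFadd with hψ
  have hinj : Function.Injective ψ := by
    rw [injective_iff_map_eq_zero]
    intro u hu
    obtain ⟨n, z, hrepu⟩ := hmem u.1 u.2
    have : F u = z • g n := hFeq u n z hrepu
    have hz : z • g n = 0 := by rw [← this]; exact hu
    have hz0 : z • g 0 = 0 := by
      rw [hpowk 0 n, smul_smul, mul_comm, ← smul_smul, zero_add, hz, smul_zero]
    have : z = 0 := by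
      by_contra hne
      have hfin : IsOfFinAddOrder (g 0) := by
        refine isOfFinAddOrder_iff_nsmul_eq_zero.mpr ⟨z.natAbs, Int.natAbs_pos.mpr hne, ?_⟩
        have : (z.natAbs : ℤ) • g 0 = 0 := by
          rcases Int.natAbs_eq z with h | h
          · rw [← h]; exact hz0
          · rw [show ((z.natAbs : ℤ)) = -z by omega, neg_smul, hz0, neg_zero]
        rw [← natCast_zsmul]; exact this
      exact (addOrderOf_eq_zero_iff.mp h0) hfin
    apply Subtype.ext
    rw [hrepu, this]
    norm_num
  have hgn_mem : ∀ n, g n ∈ AddSubgroup.map q A := by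
    intro n
    exact ⟨Y n, by rw [hA]; exact AddSubgroup.subset_closure (Or.inr ⟨n, rfl⟩), rfl⟩
  have hrange : ψ.range = AddSubgroup.map q A := by
    apply le_antisymm
    · rintro x ⟨u, rfl⟩
      obtain ⟨n, z, hrepu⟩ := hmem u.1 u.2
      have : ψ u = z • g n := hFeq u n z hrepu
      rw [this]
      exact zsmul_mem (hgn_mem n) z
    · rw [part1, AddSubgroup.closure_le]
      rintro x ⟨n, rfl⟩
      have hmemS : (((p : ℚ) ^ n)⁻¹ : ℚ) ∈ S := Submodule.subset_span ⟨n, rfl⟩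
      refine ⟨⟨((p : ℚ) ^ n)⁻¹, hmemS⟩, ?_⟩
      have : ψ ⟨((p : ℚ) ^ n)⁻¹, hmemS⟩ = (1 : ℤ) • g n :=
        hFeq _ n 1 (by norm_num)
      rw [this, one_smul]
  exact ⟨((AddEquiv.addSubgroupCongr hrange.symm).trans
    (AddMonoidHom.ofInjective (f := ψ) hinj).symm)⟩
end

section
/- Let A be an abelian group with an ω₁-filtration {A_ν : ν < ω₁} (a continuous increasing chain of subgroups with union A and A₀ = 0). Suppose {t_ν : A → A_ν : ν ∈ succ(ω₁)} is a family of idempotent endomorphisms onto the A_ν for successor ν. Suppose further that for every idempotent endomorphism π of A with countable range there is a finite set W_π ⊆ succ(ω₁) such that t_ν(a) = 0 for all ν ∈ W_π implies π(a) = 0; and that for all finite W₀, W₁ ⊆ succ(ω₁) with β = sup(W₀ ∩ W₁), there exist elements y₀, y₁ ∈ A with 0 ≠ p·y₁ − y₀ ∈ A_{β+1} and t_ν(y_ℓ) = 0 for all ν ∈ W_ℓ (ℓ = 0,1). Then A has no coherent unbounded system of projections, i.e., there is no family {π_i : i ∈ I} of idempotent endomorphisms with countable free ranges H_i, unbounded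 (every countable X ⊆ A is contained in some H_i), and coherent (H_j ⊆ H_i implies π_j ∘ π_i = π_j). -/
/-!
Fix a chain `i_α` (`α < ω₁`) of indices whose ranges `H_α = range π_{i_α}` increase and contain
`A_{α+1}`; coherence gives `π_{i_γ} ∘ π_{i_α} = π_{i_γ}` for `γ ≤ α`. Property (I) attaches a
finite set `W_α` to each `π_{i_α}`, and a closure point of `α ↦ sup W_α` yields `α < α'` with
`β = sup (W_α ∩ W_α') ≤ α`. For the elements `y₀, y₁` of property (II), `z = p y₁ - y₀` is
killed by `π_{i_α} = π_{i_α} ∘ π_{i_α'}`, hence by `π_{i_β}`; but `z ∈ A_{β+1} ⊆ H_β`, so `z = 0`.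
-/

open Ordinal Cardinal

namespace Ordinal

theorem countable_Iio_of_lt_omega_one {o : Ordinal} (h : o < ω₁) : (Set.Iio o).Countable := by
  rw [← le_aleph0_iff_set_countable, Cardinal.mk_Iio_ordinal, lift_le_aleph0, ← lt_aleph_one_iff]
  rwa [← ord_aleph, lt_ord] at h

theorem exists_closure_point_lt_omega_one (f : Ordinal → Ordinal) (hf : ∀ α < ω₁, f α < ω₁) :
    ∃ γ, 0 < γ ∧ γ < ω₁ ∧ ∀ α < γ, f α < γ := by
  let g : Ordinal → Ordinal := fun x => ⨆ α : Set.Iio x, (f α + 1)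
  have hg : ∀ x, ∀ α < x, f α < g x := fun x α hα =>
    (Order.lt_add_one_iff.2 le_rfl).trans_le
      (Ordinal.le_iSup (fun α : Set.Iio x => f α + 1) ⟨α, hα⟩)
  have hgω : ∀ x < ω₁, g x < ω₁ := fun x hx => by
    have := (countable_Iio_of_lt_omega_one hx).to_subtype
    exact iSup_lt_omega_one fun α => (isSuccLimit_omega 1).add_one_lt (hf α (α.2.trans hx))
  refine ⟨nfp g 1, zero_lt_one.trans_le (iterate_le_nfp g 1 0),
    nfp_lt_ord (by simp) hgω (one_lt_omega0.trans omega0_lt_omega_one), fun α hα => ?_⟩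
  obtain ⟨n, hn⟩ := lt_nfp_iff.1 hα
  calc f α < g (g^[n] 1) := hg _ α hn
    _ = g^[n + 1] 1 := (Function.iterate_succ_apply' g n 1).symm
    _ ≤ nfp g 1 := iterate_le_nfp g 1 (n + 1)

theorem exists_lt_sup_inter_le (W : Ordinal → Finset Ordinal)
    (hW : ∀ α < ω₁, ∀ ν ∈ W α, ν < ω₁) :
    ∃ α α', α < α' ∧ α' < ω₁ ∧ (W α ∩ W α').sup id ≤ α := by
  obtain ⟨γ, hγ₀, hγ, hclosed⟩ := exists_closure_point_lt_omega_one (fun α => (W α).sup id)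
    fun α hα => (Finset.sup_lt_iff (omega_pos 1)).2 (hW α hα)
  -- `α` bounds the part of `W γ` below `γ`, which is all `W γ` can share with `W α ⊆ γ`.
  set α := ((W γ).filter (· < γ)).sup id
  have hα : α < γ := (Finset.sup_lt_iff hγ₀).2 fun ν hν => (Finset.mem_filter.1 hν).2
  refine ⟨α, γ, hα, hγ, Finset.sup_le fun ν hν => ?_⟩
  obtain ⟨hνα, hνγ⟩ := Finset.mem_inter.1 hν
  exact Finset.le_sup (f := id) (Finset.mem_filter.2
    ⟨hνγ, (Finset.le_sup (f := id) hνα).trans_lt (hclosed α hα)⟩)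

end Ordinal

theorem exists_chain_of_forall_countable_subset {A I : Type*} (H : I → Set A)
    (hH : ∀ i, (H i).Countable) (hunb : ∀ X : Set A, X.Countable → ∃ i, X ⊆ H i)
    (C : Ordinal → Set A) (hC : ∀ α < ω₁, (C α).Countable) :
    ∃ k : Ordinal → I, ∀ α < ω₁, C α ⊆ H (k α) ∧ ∀ γ ≤ α, H (k γ) ⊆ H (k α) := by
  have hcnt : ∀ α < ω₁, ∀ g : Set.Iio α → I, (C α ∪ ⋃ γ, H (g γ)).Countable := fun α hα g => by
    have := (countable_Iio_of_lt_omega_one hα).to_subtype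
    exact (hC α hα).union (Set.countable_iUnion fun γ => hH _)
  classical
  let F : ∀ α : Ordinal, (∀ γ < α, I) → I := fun α k =>
    if h : α < ω₁ then (hunb _ (hcnt α h fun γ => k γ γ.2)).choose
    else (hunb ∅ Set.countable_empty).choose
  let k : Ordinal → I := wellFounded_lt.fix F
  refine ⟨k, fun α hα => ?_⟩
  have hk : C α ∪ ⋃ γ : Set.Iio α, H (k γ) ⊆ H (k α) := by
    rw [show k α = F α fun γ _ => k γ from wellFounded_lt.fix_eq F α]
    simp only [F, dif_pos hα]
    exact (hunb _ (hcnt α hα _)).choose_spec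
  refine ⟨fun x hx => hk (Or.inl hx), fun γ hγ => ?_⟩
  rcases hγ.lt_or_eq with hγ | rfl
  · exact fun x hx => hk (Or.inr (Set.mem_iUnion.2 ⟨⟨γ, hγ⟩, hx⟩))
  · exact subset_rfl

namespace AddMonoidHom

variable {A : Type*} [AddCommGroup A]

theorem apply_eq_self_of_mem_range {e : A →+ A} (he : e.comp e = e) {x : A} (hx : x ∈ e.range) :
    e x = x := by
  obtain ⟨y, rfl⟩ := hx
  exact DFunLike.congr_fun he y

theorem zsmul_sub_eq_zero_of_comp_eq {e₀ e₁ e₂ : A →+ A} (he₀ : e₀.comp e₀ = e₀)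
    (h₀₁ : e₀.comp e₁ = e₀) (h₁₂ : e₁.comp e₂ = e₁) (n : ℤ) {y₀ y₁ : A}
    (hy₀ : e₁ y₀ = 0) (hy₁ : e₂ y₁ = 0) (hz : n • y₁ - y₀ ∈ e₀.range) : n • y₁ - y₀ = 0 := by
  have h₁ : e₁ (n • y₁ - y₀) = 0 := by
    calc e₁ (n • y₁ - y₀) = e₁ (e₂ (n • y₁ - y₀)) := (DFunLike.congr_fun h₁₂ _).symm
      _ = -e₁ (e₂ y₀) := by simp [hy₁]
      _ = 0 := by rw [← comp_apply, h₁₂, hy₀, neg_zero]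
  calc n • y₁ - y₀ = e₀ (n • y₁ - y₀) := (apply_eq_self_of_mem_range he₀ hz).symm
    _ = e₀ (e₁ (n • y₁ - y₀)) := (DFunLike.congr_fun h₀₁ _).symm
    _ = 0 := by rw [h₁, map_zero]

end AddMonoidHom

open Ordinal in
theorem stmt11_general (p : ℕ) (A : Type) [AddCommGroup A]
    (Af : Ordinal → AddSubgroup A)
    (hctble : ∀ ν < ω₁, Countable (Af (ν + 1)))
    (t : Ordinal → A →+ A)
    -- property (I)
    (hI : ∀ π : A →+ A, π.comp π = π → Countable π.range →
      ∃ W : Finset Ordinal, (∀ ν ∈ W, ν < ω₁ ∧ ∃ μ, ν = μ + 1) ∧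
        ∀ a : A, (∀ ν ∈ W, t ν a = 0) → π a = 0)
    -- property (II)
    (hII : ∀ W₀ W₁ : Finset Ordinal,
      (∀ ν ∈ W₀, ν < ω₁ ∧ ∃ μ, ν = μ + 1) → (∀ ν ∈ W₁, ν < ω₁ ∧ ∃ μ, ν = μ + 1) →
      ∃ y₀ y₁ : A,
        (p : ℤ) • y₁ - y₀ ≠ 0 ∧
        (p : ℤ) • y₁ - y₀ ∈ Af ((W₀ ∩ W₁).sup id + 1) ∧
        (∀ ν ∈ W₀, t ν y₀ = 0) ∧ (∀ ν ∈ W₁, t ν y₁ = 0)) :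
    ¬ ∃ (I : Type) (π : I → A →+ A),
        (∀ i, (π i).comp (π i) = π i) ∧
        (∀ i, Countable ((π i).range)) ∧
        (∀ i, Module.Free ℤ ((π i).range)) ∧
        (∀ X : Set A, X.Countable → ∃ i, X ⊆ (π i).range) ∧
        (∀ i j, (π j).range ≤ (π i).range → (π j).comp (π i) = π j) := by
  rintro ⟨I, π, hπ, hct, -, hunb, hcoh⟩
  obtain ⟨k, hk⟩ := exists_chain_of_forall_countable_subset (fun i => ((π i).range : Set A))
    (fun i => Set.countable_coe_iff.1 (hct i)) hunb (fun α => (Af (α + 1) : Set A))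
    (fun α hα => Set.countable_coe_iff.1 (hctble α hα))
  choose W hWsucc hW using fun α => hI (π (k α)) (hπ _) (hct _)
  obtain ⟨α, α', hαα', hα', hβα⟩ :=
    exists_lt_sup_inter_le W fun α _ ν hν => (hWsucc α ν hν).1
  obtain ⟨y₀, y₁, hz, hzβ, hy₀, hy₁⟩ := hII (W α) (W α') (hWsucc α) (hWsucc α')
  have hα : α < ω₁ := hαα'.trans hα'
  exact hz (AddMonoidHom.zsmul_sub_eq_zero_of_comp_eq (hπ _)
    (hcoh _ _ ((hk α hα).2 _ hβα)) (hcoh _ _ ((hk α' hα').2 α hαα'.le)) p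
    (hW α y₀ hy₀) (hW α' y₁ hy₁) ((hk _ (hβα.trans_lt hα)).1 hzβ))

open Ordinal in
/-- Let `A` be an uncountable abelian group with an `ω₁`-filtration
`(Af ν)_{ν<ω₁}` (increasing, continuous at limits, `Af 0 = 0`, union `A`, each `Af (ν+1)`
countable), with idempotent endomorphisms `t ν` onto `Af ν` for successor `ν < ω₁`,
satisfying properties (I) and (II) of the construction.  Then `A` has no coherent unbounded
system of projections: there is no family `π i` of idempotent endomorphisms with countable
free ranges `H i` such that every countable subset of `A` lies in some `H i`, and
`H j ⊆ H i → π j ∘ π i = π j`. -/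
theorem stmt11 (p : ℕ) (hp : p.Prime) (A : Type) [AddCommGroup A] (hunc : ¬ Countable A)
    (Af : Ordinal → AddSubgroup A)
    (hmono : ∀ μ ν, μ ≤ ν → ν < ω₁ → Af μ ≤ Af ν)
    (hzero : Af 0 = ⊥)
    (hcont : ∀ ν < ω₁, Order.IsSuccLimit ν → Af ν = ⨆ μ ∈ Set.Iio ν, Af μ)
    (hunion : ⨆ ν ∈ Set.Iio ω₁, Af ν = ⊤)
    (hctble : ∀ ν < ω₁, Countable (Af (ν + 1)))
    (t : Ordinal → A →+ A)
    (hidem : ∀ ν < ω₁, (∃ μ, ν = μ + 1) → (t ν).comp (t ν) = t ν)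
    (hrange : ∀ ν < ω₁, (∃ μ, ν = μ + 1) → (t ν).range = Af ν)
    -- property (I)
    (hI : ∀ π : A →+ A, π.comp π = π → Countable π.range →
      ∃ W : Finset Ordinal, (∀ ν ∈ W, ν < ω₁ ∧ ∃ μ, ν = μ + 1) ∧
        ∀ a : A, (∀ ν ∈ W, t ν a = 0) → π a = 0)
    -- property (II)
    (hII : ∀ W₀ W₁ : Finset Ordinal,
      (∀ ν ∈ W₀, ν < ω₁ ∧ ∃ μ, ν = μ + 1) → (∀ ν ∈ W₁, ν < ω₁ ∧ ∃ μ, ν = μ + 1) →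
      ∃ y₀ y₁ : A,
        (p : ℤ) • y₁ - y₀ ≠ 0 ∧
        (p : ℤ) • y₁ - y₀ ∈ Af ((W₀ ∩ W₁).sup id + 1) ∧
        (∀ ν ∈ W₀, t ν y₀ = 0) ∧ (∀ ν ∈ W₁, t ν y₁ = 0)) :
    ¬ ∃ (I : Type) (π : I → A →+ A),
        (∀ i, (π i).comp (π i) = π i) ∧
        (∀ i, Countable ((π i).range)) ∧
        (∀ i, Module.Free ℤ ((π i).range)) ∧
        (∀ X : Set A, X.Countable → ∃ i, X ⊆ (π i).range) ∧
        (∀ i j, (π j).range ≤ (π i).range → (π j).comp (π i) = π j) :=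
  stmt11_general p A Af hctble t hI hII
end

section
/- Let p be a prime and A a countable free abelian group, and let H be a subgroup of A. Suppose (W_n)_{n∈ω} is an increasing sequence of finite subsets with union some index set, and for each n there is a_n ∈ A with π(a_n) ≠ 0, where π : A → H is an idempotent endomorphism onto H. Then there exist c_n ∈ {0,1} for n ∈ ω such that the sequence of partial sums ⟨Σ_{j=0}^{n} p^j c_j π(a_j) : n ∈ ω⟩ does not converge in H with respect to the p-adic topology of H. -/
namespace Stmt12Aux

variable {A : Type} [AddCommGroup A]

/-- Divisibility predicate matching the statement. -/
def Div (p : ℕ) (H : AddSubgroup A) (K : ℕ) (y : A) : Prop :=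
  ∃ h ∈ H, y = ((p : ℤ) ^ K) • h

lemma exists_height [Module.Free ℤ A] {p : ℕ} (hp : 2 ≤ p) {x : A} (hx : x ≠ 0) :
    ∃ k, 0 < k ∧ ∀ y : A, x ≠ ((p : ℤ) ^ k) • y := by
  classical
  set b := Module.Free.chooseBasis ℤ A
  have hrx : b.repr x ≠ 0 := by simpa using (b.repr.map_ne_zero_iff).mpr hx
  obtain ⟨i, hi⟩ : ∃ i, b.repr x i ≠ 0 := by
    by_contra h
    push_neg at h
    exact hrx (Finsupp.ext h)
  set v : ℤ := b.repr x i with hv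
  refine ⟨v.natAbs + 1, Nat.succ_pos _, ?_⟩
  intro y hy
  have hdvd : ((p : ℤ) ^ (v.natAbs + 1)) ∣ v := by
    have h1 : b.repr x i = ((p : ℤ) ^ (v.natAbs + 1)) * b.repr y i := by
      rw [hy]; simp [Finsupp.smul_apply]
    exact ⟨b.repr y i, h1⟩
  have hdvdn : p ^ (v.natAbs + 1) ∣ v.natAbs := by
    have := Int.natAbs_dvd_natAbs.mpr hdvd
    simpa [Int.natAbs_pow] using this
  have hle : p ^ (v.natAbs + 1) ≤ v.natAbs :=
    Nat.le_of_dvd (Int.natAbs_pos.mpr hi) hdvdn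
  have hgt : v.natAbs < p ^ (v.natAbs + 1) :=
    calc v.natAbs < 2 ^ (v.natAbs + 1) :=
          lt_of_lt_of_le Nat.lt_two_pow_self (Nat.pow_le_pow_right (by norm_num) (Nat.le_succ _))
      _ ≤ p ^ (v.natAbs + 1) := Nat.pow_le_pow_left hp _
  omega

variable (p : ℕ) (H : AddSubgroup A) (π : A →+ A) (a : ℕ → A) (e : ℕ → A)

/-- Partial sum of the first `n` terms. -/
def S (c : ℕ → ℕ) (n : ℕ) : A :=
  ∑ j ∈ Finset.range n, ((p : ℤ) ^ j * (c j : ℤ)) • π (a j)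

open Classical in
/-- A "height" witness for `π (a n)`. -/
noncomputable def kf (n : ℕ) : ℕ :=
  if h : ∃ k, 0 < k ∧ ∀ y : A, π (a n) ≠ ((p : ℤ) ^ k) • y then h.choose else 1

lemma kf_pos (n : ℕ) : 0 < kf p π a n := by
  classical
  unfold kf
  by_cases h : ∃ k, 0 < k ∧ ∀ y : A, π (a n) ≠ ((p : ℤ) ^ k) • y
  · rw [dif_pos h]; exact h.choose_spec.1
  · rw [dif_neg h]; norm_num

lemma kf_spec [Module.Free ℤ A] {n : ℕ} (hp : 2 ≤ p) (hn : π (a n) ≠ 0) :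
    ∀ y : A, π (a n) ≠ ((p : ℤ) ^ (kf p π a n)) • y := by
  have h : ∃ k, 0 < k ∧ ∀ y : A, π (a n) ≠ ((p : ℤ) ^ k) • y := exists_height hp hn
  unfold kf
  rw [dif_pos h]
  exact h.choose_spec.2

open Classical in
/-- The recursive construction: state is (current length, coefficients so far). -/
noncomputable def F : ℕ → ℕ × (ℕ → ℕ)
  | 0 => (0, fun _ => 0)
  | (m + 1) =>
      let st := F m
      let N := st.1
      let K := N + kf p π a N
      let b : ℕ := if Div p H K (S p π a st.2 N - e m) then 1 else 0
      (K, Function.update st.2 N b)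

/-- The final coefficient sequence. -/
noncomputable def cfin (j : ℕ) : ℕ := (F p H π a e (j + 1)).2 j

lemma F_fst_succ (m : ℕ) :
    (F p H π a e (m + 1)).1 = (F p H π a e m).1 + kf p π a (F p H π a e m).1 := rfl

open Classical in
lemma F_snd_succ (m : ℕ) :
    (F p H π a e (m + 1)).2 = Function.update (F p H π a e m).2 (F p H π a e m).1
      (if Div p H ((F p H π a e m).1 + kf p π a (F p H π a e m).1)
          (S p π a (F p H π a e m).2 (F p H π a e m).1 - e m) then 1 else 0) := rfl

lemma F_fst_lt (m : ℕ) : (F p H π a e m).1 < (F p H π a e (m + 1)).1 := by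
  rw [F_fst_succ]
  exact Nat.lt_add_of_pos_right (kf_pos p π a _)

lemma F_fst_mono : StrictMono (fun m => (F p H π a e m).1) :=
  strictMono_nat_of_lt_succ (F_fst_lt p H π a e)

lemma F_fst_ge (m : ℕ) : m ≤ (F p H π a e m).1 := by
  induction m with
  | zero => exact Nat.zero_le _
  | succ m ih => exact Nat.lt_of_le_of_lt ih (F_fst_lt p H π a e m)

lemma F_agree {m m' : ℕ} (hmm : m ≤ m') {j : ℕ} (hj : j < (F p H π a e m).1) :
    (F p H π a e m').2 j = (F p H π a e m).2 j := by
  induction m' with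
  | zero => have : m = 0 := Nat.le_zero.mp hmm; subst this; rfl
  | succ m' ih =>
      rcases Nat.lt_or_ge m (m' + 1) with h | h
      · have hm' : m ≤ m' := Nat.lt_succ_iff.mp h
        have hjne : j ≠ (F p H π a e m').1 := by
          have : (F p H π a e m).1 ≤ (F p H π a e m').1 :=
            (F_fst_mono p H π a e).le_iff_le.mpr hm'
          omega
        rw [F_snd_succ, Function.update_of_ne hjne]
        exact ih hm'
      · have : m = m' + 1 := le_antisymm hmm h
        subst this; rfl

lemma cfin_eq {m j : ℕ} (hj : j < (F p H π a e m).1) :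
    cfin p H π a e j = (F p H π a e m).2 j := by
  unfold cfin
  have hj1 : j < (F p H π a e (j + 1)).1 := lt_of_lt_of_le (Nat.lt_succ_self j) (F_fst_ge p H π a e _)
  rcases le_total m (j + 1) with h | h
  · rw [F_agree p H π a e h hj]
  · rw [F_agree p H π a e h hj1]

/-- Positions never touched stay zero. -/
lemma F_snd_zero {j : ℕ} (hj : ∀ t, (F p H π a e t).1 ≠ j) (t : ℕ) :
    (F p H π a e t).2 j = 0 := by
  induction t with
  | zero => rfl
  | succ t ih =>
      rw [F_snd_succ, Function.update_of_ne (fun h => (hj t) h.symm)]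
      exact ih

lemma cfin_zero_between {m j : ℕ} (h1 : (F p H π a e m).1 < j)
    (h2 : j < (F p H π a e (m + 1)).1) : cfin p H π a e j = 0 := by
  apply F_snd_zero
  intro t
  rcases le_or_gt t m with h | h
  · have : (F p H π a e t).1 ≤ (F p H π a e m).1 := (F_fst_mono p H π a e).le_iff_le.mpr h
    omega
  · have : (F p H π a e (m + 1)).1 ≤ (F p H π a e t).1 :=
      (F_fst_mono p H π a e).le_iff_le.mpr h
    omega

lemma cfin_le_one (j : ℕ) : cfin p H π a e j ≤ 1 := by
  unfold cfin
  generalize j + 1 = t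
  induction t with
  | zero => exact Nat.zero_le _
  | succ t ih =>
      rw [F_snd_succ]
      rcases eq_or_ne j (F p H π a e t).1 with h | h
      · subst h; rw [Function.update_self]; split <;> norm_num
      · rw [Function.update_of_ne h]; exact ih

section Div

variable {p H}

lemma Div.zero (K : ℕ) : Div p H K (0 : A) := ⟨0, H.zero_mem, by simp⟩

lemma Div.add {K : ℕ} {x y : A} (hx : Div p H K x) (hy : Div p H K y) :
    Div p H K (x + y) := by
  obtain ⟨h1, hh1, rfl⟩ := hx
  obtain ⟨h2, hh2, rfl⟩ := hy
  exact ⟨h1 + h2, H.add_mem hh1 hh2, by rw [smul_add]⟩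

lemma Div.sub_div {K : ℕ} {x y : A} (hxy : Div p H K (x + y)) (hy : Div p H K y) :
    Div p H K x := by
  obtain ⟨h2, hh2, hy2⟩ := hy
  obtain ⟨h1, hh1, hx1⟩ := hxy
  exact ⟨h1 - h2, H.sub_mem hh1 hh2, by rw [smul_sub, ← hx1, ← hy2]; abel⟩

end Div

/-- Terms with exponent `≥ K` are divisible. -/
lemma term_div {K j : ℕ} (hK : K ≤ j) (c : ℤ) {x : A} (hx : x ∈ H) :
    Div p H K (((p : ℤ) ^ j * c) • x) := by
  refine ⟨((p : ℤ) ^ (j - K) * c) • x, H.zsmul_mem hx _, ?_⟩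
  rw [smul_smul, ← mul_assoc, ← pow_add, Nat.add_sub_cancel' hK]

end Stmt12Aux

open Finset Stmt12Aux in
/-- let `A` be a countable free abelian group, `π` an idempotent endomorphism
onto a subgroup `H`, `(W n)` an increasing sequence of finite sets of indices, and `a n ∈ A`
with `π (a n) ≠ 0` for each `n`.  Then there are coefficients `c n ∈ {0,1}` such that the
sequence of partial sums `Σ_{j≤n} p^j c_j • π (a j)` does not converge in `H` in the `p`-adic
topology of `H`. -/
theorem stmt12 (p : ℕ) (hp : p.Prime) (A : Type) [AddCommGroup A]
    [Module.Free ℤ A] [Countable A]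
    (H : AddSubgroup A) (π : A →+ A) (hidem : π.comp π = π) (hrange : π.range = H)
    (W : ℕ → Finset ℕ) (hW : Monotone W)
    (a : ℕ → A) (ha : ∀ n, π (a n) ≠ 0) :
    ∃ c : ℕ → ℕ, (∀ n, c n ≤ 1) ∧
      ∀ s ∈ H, ¬ (∀ k : ℕ, ∃ N : ℕ, ∀ n ≥ N,
        ∃ h ∈ H, (∑ j ∈ range (n + 1), ((p : ℤ) ^ j * c j) • π (a j)) - s
          = ((p : ℤ) ^ k) • h) := by
  classical
  have hp2 : 2 ≤ p := hp.two_le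
  have haH : ∀ j, π (a j) ∈ H := fun j => hrange ▸ ⟨a j, rfl⟩
  -- enumeration of H
  obtain ⟨f, hf⟩ : ∃ f : ℕ → H, Function.Surjective f :=
    have : Nonempty H := ⟨0⟩
    exists_surjective_nat H
  set e : ℕ → A := fun m => (f m : A) with he
  set c : ℕ → ℕ := cfin p H π a e with hc
  refine ⟨c, fun n => cfin_le_one p H π a e n, ?_⟩
  intro s hs hconv
  obtain ⟨m, hm⟩ := hf ⟨s, hs⟩
  have hem : e m = s := by rw [he]; simp [hm]
  set N : ℕ := (F p H π a e m).1 with hN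
  set K : ℕ := (F p H π a e (m + 1)).1 with hK
  have hKeq : K = N + kf p π a N := F_fst_succ p H π a e m
  have hNK : N < K := F_fst_lt p H π a e m
  -- key: for all n ≥ N, ¬ Div K (S c (n+1) - s)
  have key : ∀ n, N ≤ n → ¬ Div p H K (S p π a c (n + 1) - s) := by
    intro n hn
    induction n, hn using Nat.le_induction with
    | base =>
        intro hdiv
        rw [← hem] at hdiv
        have hSsplit : S p π a c (N + 1) = S p π a c N + ((p : ℤ) ^ N * (c N : ℤ)) • π (a N) := by
          rw [S, Finset.sum_range_succ]; rfl
        have hagree : S p π a c N = S p π a (F p H π a e m).2 N := by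
          apply Finset.sum_congr rfl
          intro j hj
          rw [hc, cfin_eq p H π a e (Finset.mem_range.mp hj)]
        have hcN : c N = (F p H π a e (m + 1)).2 N := by
          rw [hc]; exact cfin_eq p H π a e hNK
        have hupd : (F p H π a e (m + 1)).2 N =
            if Div p H K (S p π a (F p H π a e m).2 N - e m) then 1 else 0 := by
          rw [F_snd_succ]
          rw [show (F p H π a e m).1 = N from hN.symm]
          rw [Function.update_self, ← hKeq]
        by_cases h0 : Div p H K (S p π a (F p H π a e m).2 N - e m)
        · have hb1 : c N = 1 := by rw [hcN, hupd, if_pos h0]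
          rw [hSsplit, hagree, hb1] at hdiv
          have hdiv' : Div p H K (((p : ℤ) ^ N * ((1 : ℕ) : ℤ)) • π (a N)) := by
            apply Div.sub_div (y := S p π a (F p H π a e m).2 N - e m) _ h0
            convert hdiv using 1
            abel
          obtain ⟨h, hhH, hhe⟩ := hdiv'
          have hx : π (a N) = ((p : ℤ) ^ (kf p π a N)) • h := by
            have hcan : ((p : ℤ) ^ N) • π (a N)
                = ((p : ℤ) ^ N) • (((p : ℤ) ^ (kf p π a N)) • h) := by
              rw [smul_smul, ← pow_add, ← hKeq]
              simpa using hhe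
            have hpN : ((p : ℤ) ^ N) ≠ 0 := pow_ne_zero _ (by exact_mod_cast hp.ne_zero)
            exact smul_right_injective A hpN hcan
          exact kf_spec p π a hp2 (ha N) h hx
        · have hb0 : c N = 0 := by rw [hcN, hupd, if_neg h0]
          rw [hSsplit, hagree, hb0] at hdiv
          exact h0 (by simpa using hdiv)
    | succ n hn ih =>
        intro hdiv
        apply ih
        have hSsplit : S p π a c (n + 1 + 1) =
            S p π a c (n + 1) + ((p : ℤ) ^ (n + 1) * (c (n + 1) : ℤ)) • π (a (n + 1)) := by
          rw [S, Finset.sum_range_succ]; rfl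
        have hterm : Div p H K (((p : ℤ) ^ (n + 1) * (c (n + 1) : ℤ)) • π (a (n + 1))) := by
          rcases le_or_gt K (n + 1) with h | h
          · exact term_div p H h _ (haH _)
          · have hc0 : c (n + 1) = 0 := by
              rw [hc]
              exact cfin_zero_between p H π a e (by omega) h
            rw [hc0]
            simpa using Div.zero (A := A) (p := p) (H := H) K
        apply Div.sub_div (y := ((p : ℤ) ^ (n + 1) * (c (n + 1) : ℤ)) • π (a (n + 1))) _ hterm
        rw [hSsplit] at hdiv
        convert hdiv using 1
        abel
  -- contradiction with convergence
  obtain ⟨N', hN'⟩ := hconv K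
  have hdiv := hN' (max N' N) (le_max_left _ _)
  have : Div p H K (S p π a c (max N' N + 1) - s) := by
    obtain ⟨h, hh, heq⟩ := hdiv
    exact ⟨h, hh, by rw [← heq]; rfl⟩
  exact key (max N' N) (le_max_right _ _) this
end

section
/- For any stationary set S ⊆ ω₁, S can be partitioned into two disjoint stationary subsets S₀ and S₁. -/
open Ordinal

/-- A subset `C` of `ω₁` is a club: it is unbounded in `ω₁` and closed (every nonzero
`α < ω₁` that is a limit of elements of `C` belongs to `C`). -/
def IsClubInOmega1 (C : Set Ordinal) : Prop :=
  (∀ c ∈ C, c < ω₁) ∧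
  (∀ α < ω₁, ∃ β ∈ C, α ≤ β) ∧
  (∀ α, α < ω₁ → α ≠ 0 → (∀ β < α, (C ∩ Set.Ioo β α).Nonempty) → α ∈ C)

/-- A subset `S` of `ω₁` is stationary: it meets every club. -/
def IsStationaryInOmega1 (S : Set Ordinal) : Prop :=
  (∀ s ∈ S, s < ω₁) ∧ ∀ C : Set Ordinal, IsClubInOmega1 C → (S ∩ C).Nonempty

namespace SolovayAux

open Set Cardinal

lemma lt_omega1_iff {o : Ordinal} : o < ω₁ ↔ o.card ≤ ℵ₀ := by
  rw [← ord_aleph, Cardinal.lt_ord, ← succ_aleph0, Order.lt_succ_iff]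

lemma succ_lt_omega1 {o : Ordinal} (h : o < ω₁) : o + 1 < ω₁ := by
  rw [lt_omega1_iff] at h ⊢
  rw [Ordinal.card_add, Ordinal.card_one]
  exact (Cardinal.add_le_aleph0.2 ⟨h, Cardinal.one_le_aleph0⟩)

lemma self_lt_succ (o : Ordinal) : o < o + 1 := by
  rw [Ordinal.add_one_eq_succ]; exact Order.lt_succ o

lemma sup_lt_omega1 (f : ℕ → Ordinal) (h : ∀ n, f n < ω₁) : (⨆ n, f n) < ω₁ := by
  have h' : ∀ n, f n < (Cardinal.aleph 1).ord := by
    intro n; rw [ord_aleph]; exact h n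
  exact Ordinal.iSup_lt_omega_one h

lemma add_omega0_lt_omega1 {o : Ordinal} (h : o < ω₁) : o + ω < ω₁ := by
  rw [lt_omega1_iff] at h ⊢
  rw [Ordinal.card_add, Ordinal.card_omega0]
  exact (Cardinal.add_le_aleph0.2 ⟨h, le_rfl⟩)

/-- Countable intersections of clubs are clubs. -/
lemma club_iInter (C : ℕ → Set Ordinal) (hC : ∀ n, IsClubInOmega1 (C n)) :
    IsClubInOmega1 (⋂ n, C n) := by
  have hmem : ∀ c, (∀ n, c ∈ C n) → c < ω₁ := fun c h => (hC 0).1 c (h 0)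
  refine ⟨fun c hc => hmem c (by simpa [Set.mem_iInter] using hc), ?_, ?_⟩
  · -- unboundedness
    intro α hα
    -- pick n x : an element of C n strictly above x
    have hpick : ∀ (n : ℕ) (x : Ordinal), ∃ y, x < ω₁ → y ∈ C n ∧ x < y := by
      intro n x
      by_cases hx : x < ω₁
      · obtain ⟨y, hy, hxy⟩ := (hC n).2.1 (x + 1) (succ_lt_omega1 hx)
        exact ⟨y, fun _ => ⟨hy, lt_of_lt_of_le (self_lt_succ x) hxy⟩⟩
      · exact ⟨0, fun h => absurd h hx⟩
    choose pick hpick using hpick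
    -- build an increasing sequence
    let s : ℕ → Ordinal := fun k => Nat.rec α
      (fun k sk => max (sk + 1) (⨆ n, if n ≤ k then pick n sk else 0)) k
    have hs0 : s 0 = α := rfl
    have hsucc : ∀ k, s (k + 1) = max (s k + 1) (⨆ n, if n ≤ k then pick n (s k) else 0) :=
      fun k => rfl
    have hslt : ∀ k, s k < ω₁ := by
      intro k
      induction k with
      | zero => exact hα
      | succ k ih =>
        rw [hsucc k]
        apply max_lt (succ_lt_omega1 ih)
        apply sup_lt_omega1
        intro n
        by_cases hn : n ≤ k
        · simp only [hn, if_true]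
          exact (hC n).1 _ ((hpick n (s k)) ih).1
        · simp only [hn, if_false]
          exact (Ordinal.omega_pos 1)
    have hmono : ∀ k, s k < s (k + 1) := by
      intro k
      rw [hsucc k]
      exact lt_of_lt_of_le (self_lt_succ (s k)) (le_max_left _ _)
    have hmono' : ∀ {j k : ℕ}, j ≤ k → s j ≤ s k := by
      intro j k hjk
      induction k with
      | zero => simp_all
      | succ k ih =>
        rcases Nat.lt_or_ge j (k + 1) with h | h
        · exact le_trans (ih (Nat.lt_succ_iff.1 h)) (hmono k).le
        · have : j = k + 1 := le_antisymm hjk h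
          simp [this]
    set lam := ⨆ k, s k with hlam
    have hlamlt : lam < ω₁ := sup_lt_omega1 _ hslt
    have hsklam : ∀ k, s k < lam :=
      fun k => lt_of_lt_of_le (hmono k) (Ordinal.le_iSup s (k + 1))
    have hlamne : lam ≠ 0 := by
      intro h
      exact absurd (h ▸ hsklam 0) (by simp)
    have hpickmem : ∀ n k, n ≤ k → pick n (s k) ∈ C n ∧ s k < pick n (s k) ∧ pick n (s k) < lam := by
      intro n k hnk
      refine ⟨((hpick n (s k)) (hslt k)).1, ((hpick n (s k)) (hslt k)).2, ?_⟩
      have h1 : pick n (s k) ≤ ⨆ m, if m ≤ k then pick m (s k) else 0 := by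
        have := Ordinal.le_iSup (fun m => if m ≤ k then pick m (s k) else 0) n
        simpa [hnk] using this
      calc pick n (s k) ≤ s (k + 1) := by rw [hsucc k]; exact le_trans h1 (le_max_right _ _)
        _ < lam := hsklam (k + 1)
    have hlimmem : ∀ n, lam ∈ C n := by
      intro n
      apply (hC n).2.2 lam hlamlt hlamne
      intro γ hγ
      obtain ⟨k, hk⟩ := Ordinal.lt_iSup_iff.1 hγ
      obtain ⟨h1, h2, h3⟩ := hpickmem n (max n k) (le_max_left _ _)
      refine ⟨pick n (s (max n k)), h1, ?_, h3⟩
      exact lt_of_lt_of_le hk (le_trans (hmono' (le_max_right n k)) h2.le)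
    exact ⟨lam, Set.mem_iInter.2 hlimmem, le_of_lt (hs0 ▸ hsklam 0)⟩
  · -- closedness
    intro α hα hne h
    apply Set.mem_iInter.2
    intro n
    apply (hC n).2.2 α hα hne
    intro β hβ
    obtain ⟨e, he1, he2⟩ := h β hβ
    exact ⟨e, Set.mem_iInter.1 he1 n, he2⟩

lemma club_inter {C D : Set Ordinal} (hC : IsClubInOmega1 C) (hD : IsClubInOmega1 D) :
    IsClubInOmega1 (C ∩ D) := by
  have : C ∩ D = ⋂ n : ℕ, (if n = 0 then C else D) := by
    ext x
    simp only [Set.mem_inter_iff, Set.mem_iInter]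
    constructor
    · rintro ⟨h1, h2⟩ n; by_cases hn : n = 0 <;> simp [hn, h1, h2]
    · intro h
      have h0 := h 0
      have h1 := h 1
      simp at h0 h1
      exact ⟨h0, h1⟩
  rw [this]
  apply club_iInter
  intro n
  by_cases hn : n = 0 <;> simp [hn, hC, hD]

/-- The set of limit ordinals above `β` and below `ω₁` is a club. -/
lemma club_limits (β : Ordinal) (hβ : β < ω₁) :
    IsClubInOmega1 {α | β < α ∧ α < ω₁ ∧ Order.IsSuccLimit α} := by
  refine ⟨fun c hc => hc.2.1, ?_, ?_⟩
  · intro α hα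
    refine ⟨max α (β + 1) + ω, ⟨?_, ?_, isSuccLimit_add _ isSuccLimit_omega0⟩, ?_⟩
    · calc β < β + 1 := self_lt_succ β
        _ ≤ max α (β + 1) := le_max_right _ _
        _ ≤ max α (β + 1) + ω := le_self_add
    · exact add_omega0_lt_omega1 (max_lt hα (succ_lt_omega1 hβ))
    · exact le_trans (le_max_left _ _) (le_self_add)
  · intro α hα hne h
    have hβα : β < α := by
      obtain ⟨e, he1, he2⟩ := h 0 (pos_iff_ne_zero.2 hne)
      exact lt_trans he1.1 he2.2
    refine ⟨hβα, hα, Order.isSuccLimit_iff_of_orderBot.2 ⟨by simpa using hne, Order.isSuccPrelimit_of_succ_lt ?_⟩⟩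
    intro γ hγ
    obtain ⟨e, he1, he2⟩ := h γ hγ
    rw [← Ordinal.add_one_eq_succ]
    calc γ + 1 ≤ e := by
          rw [Ordinal.add_one_eq_succ]; exact Order.succ_le_of_lt he2.1
      _ < α := he2.2

lemma countable_Iio {δ : Ordinal} (h : δ < ω₁) : (Set.Iio δ).Countable := by
  rw [← Set.countable_coe_iff, ← Cardinal.mk_le_aleph0_iff, Ordinal.mk_Iio_ordinal]
  calc Cardinal.lift δ.card ≤ Cardinal.lift ℵ₀ := Cardinal.lift_le.2 (lt_omega1_iff.1 h)
    _ = ℵ₀ := Cardinal.lift_aleph0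

/-- The diagonal intersection of clubs is a club. -/
lemma club_diag (D : Ordinal → Set Ordinal) (hD : ∀ β < ω₁, IsClubInOmega1 (D β)) :
    IsClubInOmega1 {α | α < ω₁ ∧ ∀ β < α, α ∈ D β} := by
  refine ⟨fun c hc => hc.1, ?_, ?_⟩
  · -- unboundedness
    intro α hα
    -- step function: for x < ω₁, find y > x, y < ω₁, y ∈ D β for all β ≤ x
    have hstep : ∀ x : Ordinal, ∃ y, x < ω₁ → (x < y ∧ y < ω₁ ∧ ∀ β ≤ x, y ∈ D β) := by
      intro x
      by_cases hx : x < ω₁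
      · have hcnt : (Set.Iio (x + 1)).Countable := countable_Iio (succ_lt_omega1 hx)
        obtain ⟨e, he⟩ := hcnt.exists_eq_range ⟨x, self_lt_succ x⟩
        have heval : ∀ n, e n ≤ x := by
          intro n
          have : e n ∈ Set.Iio (x + 1) := he ▸ Set.mem_range_self n
          rw [Ordinal.add_one_eq_succ] at this
          exact Order.lt_succ_iff.1 this
        have hclubs : ∀ n, IsClubInOmega1 (D (e n)) :=
          fun n => hD (e n) (lt_of_le_of_lt (heval n) hx)
        obtain ⟨y, hy1, hy2⟩ := (club_iInter _ hclubs).2.1 (x + 1) (succ_lt_omega1 hx)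
        refine ⟨y, fun _ => ⟨lt_of_lt_of_le (self_lt_succ x) hy2,
          (hclubs 0).1 y (Set.mem_iInter.1 hy1 0), ?_⟩⟩
        intro β hβ
        have : β ∈ Set.Iio (x + 1) := lt_of_le_of_lt hβ (self_lt_succ x)
        rw [he] at this
        obtain ⟨n, hn⟩ := this
        exact hn ▸ Set.mem_iInter.1 hy1 n
      · exact ⟨0, fun h => absurd h hx⟩
    choose step hstep using hstep
    let s : ℕ → Ordinal := fun k => Nat.rec α (fun _ sk => step sk) k
    have hs0 : s 0 = α := rfl
    have hsucc : ∀ k, s (k + 1) = step (s k) := fun k => rfl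
    have hslt : ∀ k, s k < ω₁ := by
      intro k
      induction k with
      | zero => exact hα
      | succ k ih => rw [hsucc k]; exact (hstep (s k) ih).2.1
    have hmono : ∀ k, s k < s (k + 1) := by
      intro k; rw [hsucc k]; exact (hstep (s k) (hslt k)).1
    have hmono' : ∀ {j k : ℕ}, j ≤ k → s j ≤ s k := by
      intro j k hjk
      induction k with
      | zero => simp_all
      | succ k ih =>
        rcases Nat.lt_or_ge j (k + 1) with h | h
        · exact le_trans (ih (Nat.lt_succ_iff.1 h)) (hmono k).le
        · have : j = k + 1 := le_antisymm hjk h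
          simp [this]
    set lam := ⨆ k, s k with hlam
    have hlamlt : lam < ω₁ := sup_lt_omega1 _ hslt
    have hsklam : ∀ k, s k < lam :=
      fun k => lt_of_lt_of_le (hmono k) (Ordinal.le_iSup s (k + 1))
    have hlamne : lam ≠ 0 := by
      intro h; exact absurd (h ▸ hsklam 0) (by simp)
    refine ⟨lam, ⟨hlamlt, ?_⟩, le_of_lt (hs0 ▸ hsklam 0)⟩
    intro β hβ
    obtain ⟨k, hk⟩ := Ordinal.lt_iSup_iff.1 hβ
    apply (hD β (lt_trans hβ hlamlt)).2.2 lam hlamlt hlamne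
    intro γ hγ
    obtain ⟨m, hm⟩ := Ordinal.lt_iSup_iff.1 hγ
    set i := max m k with hi
    have h1 : s (i + 1) ∈ D β := by
      rw [hsucc i]
      exact (hstep (s i) (hslt i)).2.2 β (le_trans hk.le (hmono' (le_max_right m k)))
    refine ⟨s (i + 1), h1, ?_, hsklam (i + 1)⟩
    exact lt_of_lt_of_le hm (le_trans (hmono' (le_max_left m k)) (hmono i).le)
  · -- closedness
    intro α hα hne h
    refine ⟨hα, ?_⟩
    intro β hβ
    apply (hD β (lt_trans hβ hα)).2.2 α hα hne
    intro γ hγ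
    obtain ⟨e, he1, he2⟩ := h (max γ β) (max_lt hγ hβ)
    refine ⟨e, he1.2 β (lt_of_le_of_lt (le_max_right γ β) he2.1), ?_, he2.2⟩
    exact lt_of_le_of_lt (le_max_left γ β) he2.1

lemma stat_inter_club {S C : Set Ordinal} (hS : IsStationaryInOmega1 S)
    (hC : IsClubInOmega1 C) : IsStationaryInOmega1 (S ∩ C) := by
  refine ⟨fun s hs => hS.1 s hs.1, ?_⟩
  intro C' hC'
  obtain ⟨x, hx1, hx2⟩ := hS.2 (C ∩ C') (club_inter hC hC')
  exact ⟨x, ⟨hx1, hx2.1⟩, hx2.2⟩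

lemma stat_mono {A B : Set Ordinal} (hA : IsStationaryInOmega1 A) (hAB : A ⊆ B)
    (hB : ∀ b ∈ B, b < ω₁) : IsStationaryInOmega1 B := by
  refine ⟨hB, ?_⟩
  intro C hC
  obtain ⟨x, hx1, hx2⟩ := hA.2 C hC
  exact ⟨x, hAB hx1, hx2⟩

lemma not_stat {X : Set Ordinal} (h : ¬IsStationaryInOmega1 X) (hX : ∀ x ∈ X, x < ω₁) :
    ∃ C, IsClubInOmega1 C ∧ X ∩ C = ∅ := by
  rw [IsStationaryInOmega1, not_and] at h
  have := h hX
  push_neg at this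
  obtain ⟨C, hC1, hC2⟩ := this
  exact ⟨C, hC1, hC2⟩

/-- Existence of cofinal ω-sequences for countable limit ordinals. -/
lemma cofinal_seq : ∀ δ : Ordinal, ∃ f : ℕ → Ordinal,
    (δ < ω₁ ∧ Order.IsSuccLimit δ) → ((∀ n, f n < δ) ∧ ∀ β < δ, ∃ n, β < f n) := by
  intro δ
  by_cases h : δ < ω₁ ∧ Order.IsSuccLimit δ
  · obtain ⟨hδ, hlim⟩ := h
    have hcnt : (Set.Iio δ).Countable := countable_Iio hδ
    obtain ⟨e, he⟩ := hcnt.exists_eq_range ⟨0, hlim.pos⟩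
    refine ⟨e, fun _ => ⟨?_, ?_⟩⟩
    · intro n
      have : e n ∈ Set.Iio δ := he ▸ Set.mem_range_self n
      exact this
    · intro β hβ
      have : Order.succ β ∈ Set.Iio δ := hlim.succ_lt hβ
      rw [he] at this
      obtain ⟨n, hn⟩ := this
      exact ⟨n, hn ▸ Order.lt_succ β⟩
  · exact ⟨fun _ => 0, fun h' => absurd h' h⟩

end SolovayAux

/-- Solovay splitting, two pieces: any stationary subset `S` of `ω₁` can be
partitioned into two disjoint stationary subsets. -/
theorem stmt13 (S : Set Ordinal) (hS : IsStationaryInOmega1 S) :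
    ∃ S₀ S₁ : Set Ordinal, S₀ ⊆ S ∧ S₁ ⊆ S ∧ S₀ ∩ S₁ = ∅ ∧ S₀ ∪ S₁ = S ∧
      IsStationaryInOmega1 S₀ ∧ IsStationaryInOmega1 S₁ := by
  classical
  open SolovayAux in
  -- restrict to limit points
  have hLclub : IsClubInOmega1 {α | (0 : Ordinal) < α ∧ α < ω₁ ∧ Order.IsSuccLimit α} :=
    SolovayAux.club_limits 0 (Ordinal.omega_pos 1)
  set T : Set Ordinal := S ∩ {α | (0 : Ordinal) < α ∧ α < ω₁ ∧ Order.IsSuccLimit α} with hT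
  have hTstat : IsStationaryInOmega1 T := SolovayAux.stat_inter_club hS hLclub
  have hTlt : ∀ δ ∈ T, δ < ω₁ := fun δ hδ => hδ.2.2.1
  have hTlim : ∀ δ ∈ T, Order.IsSuccLimit δ := fun δ hδ => hδ.2.2.2
  -- cofinal sequences
  choose f hf using SolovayAux.cofinal_seq
  have hfT : ∀ δ ∈ T, (∀ n, f δ n < δ) ∧ ∀ β < δ, ∃ n, β < f δ n :=
    fun δ hδ => hf δ ⟨hTlt δ hδ, hTlim δ hδ⟩
  -- Claim A: there is n such that for all β < ω₁, {δ ∈ T | β < f δ n} is stationary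
  have claimA : ∃ n : ℕ, ∀ β < ω₁, IsStationaryInOmega1 {δ | δ ∈ T ∧ β < f δ n} := by
    by_contra hcon
    push_neg at hcon
    choose βf hβf hnstat using hcon
    choose Cf hCf hCfdisj using fun n =>
      SolovayAux.not_stat (hnstat n) (fun x hx => hTlt x hx.1)
    set βs := ⨆ n, βf n with hβs
    have hβslt : βs < ω₁ := SolovayAux.sup_lt_omega1 _ hβf
    have hKclub : IsClubInOmega1 ((⋂ n, Cf n) ∩ {α | βs < α ∧ α < ω₁ ∧ Order.IsSuccLimit α}) :=
      SolovayAux.club_inter (SolovayAux.club_iInter _ hCf) (SolovayAux.club_limits βs hβslt)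
    obtain ⟨δ, hδT, hδK⟩ := hTstat.2 _ hKclub
    have hδC := hδK.1
    have hδβs := hδK.2.1
    -- cofinality gives n with βs < f δ n
    obtain ⟨n, hn⟩ := (hfT δ hδT).2 βs hδβs
    have hδmem : δ ∈ {δ' | δ' ∈ T ∧ βf n < f δ' n} ∩ Cf n := by
      refine ⟨⟨hδT, ?_⟩, Set.mem_iInter.1 hδC n⟩
      exact lt_of_le_of_lt (Ordinal.le_iSup βf n) hn
    rw [hCfdisj n] at hδmem
    exact hδmem
  obtain ⟨n, hn⟩ := claimA
  -- the regressive function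
  set g : Ordinal → Ordinal := fun δ => f δ n with hg
  have hgreg : ∀ δ ∈ T, g δ < δ := fun δ hδ => (hfT δ hδ).1 n
  -- Claim B: there is β < ω₁ such that {δ ∈ T | g δ ≤ β} is stationary
  have claimB : ∃ β < ω₁, IsStationaryInOmega1 {δ | δ ∈ T ∧ g δ ≤ β} := by
    by_contra hcon
    push_neg at hcon
    have hns : ∀ β : Ordinal, ∃ D, β < ω₁ →
        (IsClubInOmega1 D ∧ {δ | δ ∈ T ∧ g δ ≤ β} ∩ D = ∅) := by
      intro β
      by_cases hβ : β < ω₁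
      · obtain ⟨D, hD1, hD2⟩ :=
          SolovayAux.not_stat (hcon β hβ) (fun x hx => hTlt x hx.1)
        exact ⟨D, fun _ => ⟨hD1, hD2⟩⟩
      · exact ⟨∅, fun h => absurd h hβ⟩
    choose D hD using hns
    have hdiag : IsClubInOmega1 {α | α < ω₁ ∧ ∀ β < α, α ∈ D β} :=
      SolovayAux.club_diag D (fun β hβ => (hD β hβ).1)
    obtain ⟨δ, hδT, hδΔ⟩ := hTstat.2 _ hdiag
    have hgδ : g δ < δ := hgreg δ hδT
    have hδD : δ ∈ D (g δ) := hδΔ.2 (g δ) hgδ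
    have hmem : δ ∈ {δ' | δ' ∈ T ∧ g δ' ≤ g δ} ∩ D (g δ) := ⟨⟨hδT, le_rfl⟩, hδD⟩
    rw [(hD (g δ) (lt_trans hgδ (hTlt δ hδT))).2] at hmem
    exact hmem
  obtain ⟨β, hβlt, hβstat⟩ := claimB
  -- assemble the partition
  refine ⟨{δ | δ ∈ T ∧ g δ ≤ β}, S \ {δ | δ ∈ T ∧ g δ ≤ β}, ?_, ?_, ?_, ?_, hβstat, ?_⟩
  · exact fun δ hδ => hδ.1.1
  · exact fun δ hδ => hδ.1
  · ext x; simp only [Set.mem_inter_iff, Set.mem_diff, Set.mem_empty_iff_false, iff_false]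
    tauto
  · apply Set.union_diff_cancel
    exact fun δ hδ => hδ.1.1
  · apply SolovayAux.stat_mono (hn β hβlt)
    · intro δ hδ
      refine ⟨hδ.1.1, ?_⟩
      intro hmem
      exact absurd hδ.2 (not_lt.2 hmem.2)
    · exact fun b hb => hS.1 b hb.1
end
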